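/- If x ≠ y are worlds of the rooted k-contraction of a finite pointed model with b(x) = b(y) = h, then x and y are not h-bisimilar. -/

import Mathlib

/-- A finite pointed Kripke model with modality indices `I` and atoms `P`. -/
structure PModel (I P : Type) where
  W : Type
  fin : Finite W
  R : I → W → W → Prop
  V : P → W → Prop
  d : W

variable {I P : Type}

/-- `h`-bisimilarity between worlds of two models (back-and-forth to depth `h`). -/
def Bisim (M N : PModel I P) : ℕ → M.W → N.W → Prop
  | 0, w, v => ∀ p, M.V p w ↔ N.V p v
  | h+1, w, v => (∀ p, M.V p w ↔ N.V p v)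
      ∧ (∀ i w', M.R i w w' → ∃ v', N.R i v v' ∧ Bisim M N h w' v')
      ∧ (∀ i v', N.R i v v' → ∃ w', M.R i w w' ∧ Bisim M N h w' v')

/-- `k`-bisimilarity of pointed models. -/
def PBisim (k : ℕ) (M N : PModel I P) : Prop := Bisim M N k M.d N.d

/-- Directed paths of length `n`. -/
def Steps (M : PModel I P) : ℕ → M.W → M.W → Prop
  | 0, w, v => w = v
  | n+1, w, v => ∃ u i, M.R i w u ∧ Steps M n u v

/-- Depth of a world: length of a shortest path from the designated world (`⊤` if none). -/
noncomputable def depth (M : PModel I P) (w : M.W) : ℕ∞ :=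
  sInf {n : ℕ∞ | ∃ m : ℕ, n = (m : ℕ∞) ∧ Steps M m M.d w}

/-- Bound `b(w) = k − d(w)`, with `⊥` for unreachable worlds. -/
noncomputable def bound (k : ℕ) (M : PModel I P) (w : M.W) : WithBot ℤ :=
  ENat.recTopCoe (⊥ : WithBot ℤ) (fun n : ℕ => (((k : ℤ) - n : ℤ) : WithBot ℤ)) (depth M w)

/-- The bound as a natural number (meaningful when `0 ≤ bound k M w`). -/
noncomputable def nbound (k : ℕ) (M : PModel I P) (w : M.W) : ℕ :=
  k - (depth M w).toNat
/-- `x` represents `y` : `b(x) ≥ b(y) ≥ 0` and `x ∼_{b(y)} y`. -/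
noncomputable def Repr' (k : ℕ) (M : PModel I P) (x y : M.W) : Prop :=
  0 ≤ bound k M y ∧ bound k M y ≤ bound k M x ∧ Bisim M M (nbound k M y) x y

/-- `x` strictly represents `y`. -/
noncomputable def SRepr (k : ℕ) (M : PModel I P) (x y : M.W) : Prop :=
  Repr' k M x y ∧ bound k M y < bound k M x

/-- Maximal representatives. -/
noncomputable def maxRepr (k : ℕ) (M : PModel I P) : Set M.W :=
  {x | 0 ≤ bound k M x ∧ ∀ y, ¬ SRepr k M y x}

/-- Representative class `[x]_{b(x)}`. -/
noncomputable def reprClass (k : ℕ) (M : PModel I P) (x : M.W) : Set M.W :=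
  {y | Bisim M M (nbound k M x) x y}

lemma depth_d (M : PModel I P) : depth M M.d = 0 := by
  have h0 : (0 : ℕ∞) ∈ {n : ℕ∞ | ∃ m : ℕ, n = (m : ℕ∞) ∧ Steps M m M.d M.d} :=
    ⟨0, by simp, rfl⟩
  have := sInf_le h0
  simpa [depth, le_zero_iff] using this

lemma bound_d (k : ℕ) (M : PModel I P) : bound k M M.d = ((k : ℤ) : WithBot ℤ) := by
  have h := depth_d M
  simp only [bound, h, ENat.recTopCoe_zero]
  norm_num

lemma bound_le (k : ℕ) (M : PModel I P) (w : M.W) : bound k M w ≤ ((k : ℤ) : WithBot ℤ) := by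
  simp only [bound]
  by_cases hd : depth M w = ⊤
  · simp [hd]
  · lift depth M w to ℕ using hd with n hn
    simp only [ENat.recTopCoe_coe]
    exact_mod_cast (by omega : (k : ℤ) - n ≤ (k:ℤ))

lemma d_mem_maxRepr (k : ℕ) (M : PModel I P) : M.d ∈ maxRepr k M := by
  constructor
  · rw [bound_d]; exact_mod_cast Int.ofNat_nonneg k
  · rintro y ⟨_, hlt⟩
    exact absurd (lt_of_lt_of_le hlt (bound_le k M y)) (by rw [bound_d]; exact lt_irrefl _)

/-- Carrier of the rooted k-contraction: representative classes of maximal representatives. -/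
def ContrW (k : ℕ) (M : PModel I P) : Type :=
  {S : Set M.W // ∃ x ∈ maxRepr k M, S = reprClass k M x}

instance (k : ℕ) (M : PModel I P) : Finite (ContrW k M) := by
  have := M.fin
  exact Subtype.finite

/-- The rooted `k`-contraction. -/
noncomputable def rootedContraction (k : ℕ) (M : PModel I P) : PModel I P where
  W := ContrW k M
  fin := inferInstance
  R := fun i S T => ∃ x ∈ maxRepr k M, ∃ y ∈ maxRepr k M,
        S.1 = reprClass k M x ∧ T.1 = reprClass k M y ∧
        0 < bound k M x ∧ ∃ z, M.R i x z ∧ Bisim M M (nbound k M x - 1) y z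
  V := fun p S => ∃ x ∈ maxRepr k M, S.1 = reprClass k M x ∧ M.V p x
  d := ⟨reprClass k M M.d, M.d, d_mem_maxRepr k M, rfl⟩

/-!
The rooted `k`-contraction preserves depth: a world `[x]` lies at the same depth as its maximal
representative `x`. Along a contraction edge `[x] → [y]` the depth of maximal representatives
grows by at most one, since otherwise the successor of `x` witnessing the edge would strictly
represent `y`; so paths in the contraction do not go deeper than paths in `M`. Conversely, a
shortest path to `x` lifts through the `k`-bisimulation between the two roots to a path ending at
some `[y]` with `y` representing `x`, and maximality of `x` gives `[y] = [x]`.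

Hence `S = [x]`, `T = [y]` with `b(x) = b(y) = h`; each world is `h`-bisimilar to its
representative, so `x ∼_h y`, which puts `y` in `[x]_h` and forces `S = T`.
-/

namespace Bisim

variable {M N O : PModel I P}

lemma val_iff {n : ℕ} {w : M.W} {v : N.W} (h : Bisim M N n w v) (p : P) :
    M.V p w ↔ N.V p v := by
  cases n with
  | zero => exact h p
  | succ n => exact h.1 p

lemma refl (M : PModel I P) : ∀ (n : ℕ) (w : M.W), Bisim M M n w w
  | 0, _ => fun _ => Iff.rfl
  | n + 1, _ => ⟨fun _ => Iff.rfl, fun _ w' h => ⟨w', h, refl M n w'⟩,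
      fun _ v' h => ⟨v', h, refl M n v'⟩⟩

lemma symm : ∀ {n : ℕ} {w : M.W} {v : N.W}, Bisim M N n w v → Bisim N M n v w
  | 0, _, _, h => fun p => (h p).symm
  | _ + 1, _, _, h =>
    ⟨fun p => (h.1 p).symm,
      fun i v' hv => let ⟨w', hw, hb⟩ := h.2.2 i v' hv; ⟨w', hw, hb.symm⟩,
      fun i w' hw => let ⟨v', hv, hb⟩ := h.2.1 i w' hw; ⟨v', hv, hb.symm⟩⟩

lemma trans : ∀ {n : ℕ} {w : M.W} {v : N.W} {u : O.W},
    Bisim M N n w v → Bisim N O n v u → Bisim M O n w u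
  | 0, _, _, _, h₁, h₂ => fun p => (h₁ p).trans (h₂ p)
  | _ + 1, _, _, _, h₁, h₂ =>
    ⟨fun p => (h₁.1 p).trans (h₂.1 p),
      fun i w' hw =>
        let ⟨v', hv, hb₁⟩ := h₁.2.1 i w' hw
        let ⟨u', hu, hb₂⟩ := h₂.2.1 i v' hv
        ⟨u', hu, hb₁.trans hb₂⟩,
      fun i u' hu =>
        let ⟨v', hv, hb₂⟩ := h₂.2.2 i u' hu
        let ⟨w', hw, hb₁⟩ := h₁.2.2 i v' hv
        ⟨w', hw, hb₁.trans hb₂⟩⟩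

lemma mono : ∀ {n m : ℕ} {w : M.W} {v : N.W}, Bisim M N n w v → m ≤ n → Bisim M N m w v
  | _, 0, _, _, h, _ => h.val_iff
  | 0, _ + 1, _, _, _, hm => absurd hm (Nat.not_succ_le_zero _)
  | _ + 1, _ + 1, _, _, h, hm =>
    ⟨h.1,
      fun i w' hw => let ⟨v', hv, hb⟩ := h.2.1 i w' hw; ⟨v', hv, hb.mono (by omega)⟩,
      fun i v' hv => let ⟨w', hw, hb⟩ := h.2.2 i v' hv; ⟨w', hw, hb.mono (by omega)⟩⟩

lemma exists_steps : ∀ {m n : ℕ} {w w' : M.W} {v : N.W},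
    Bisim M N n w v → Steps M m w w' → m ≤ n →
      ∃ v', Steps N m v v' ∧ Bisim M N (n - m) w' v'
  | 0, _, _, _, v, h, rfl, _ => ⟨v, rfl, h⟩
  | _ + 1, _ + 1, _, _, _, h, ⟨_, i, hu, hs⟩, hm =>
    let ⟨v₁, hv₁, hb⟩ := h.2.1 i _ hu
    let ⟨v', hs', hb'⟩ := hb.exists_steps hs (by omega)
    ⟨v', ⟨v₁, i, hv₁, hs'⟩, by simpa using hb'⟩
  | _ + 1, 0, _, _, _, _, _, hm => absurd hm (Nat.not_succ_le_zero _)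

end Bisim

section Depth

variable {M : PModel I P}

lemma steps_snoc : ∀ {m : ℕ} {a b c : M.W} {i : I},
    Steps M m a b → M.R i b c → Steps M (m + 1) a c
  | 0, _, _, c, i, rfl, hbc => ⟨c, i, hbc, rfl⟩
  | _ + 1, _, _, _, _, ⟨u, j, hau, hub⟩, hbc => ⟨u, j, hau, steps_snoc hub hbc⟩

lemma depth_le_of_steps {m : ℕ} {w : M.W} (h : Steps M m M.d w) : depth M w ≤ m :=
  sInf_le ⟨m, rfl, h⟩

lemma steps_of_depth_eq {w : M.W} {n : ℕ} (h : depth M w = n) : Steps M n M.d w := by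
  have hne : {n : ℕ∞ | ∃ m : ℕ, n = m ∧ Steps M m M.d w}.Nonempty := by
    by_contra hempty
    rw [depth, Set.not_nonempty_iff_eq_empty.1 hempty, sInf_empty] at h
    exact ENat.top_ne_natCast n h
  obtain ⟨m, hm, hs⟩ := csInf_mem hne
  rw [← depth, h] at hm
  exact (Nat.cast_injective hm).symm ▸ hs

lemma depth_le_depth_add_one {i : I} {w z : M.W} (h : M.R i w z) :
    depth M z ≤ depth M w + 1 := by
  cases hw : depth M w using ENat.recTopCoe with
  | top => simp
  | coe n => exact_mod_cast depth_le_of_steps (steps_snoc (steps_of_depth_eq hw) h)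

end Depth

section Bound

variable {k : ℕ} {M : PModel I P}

lemma bound_le_bound_iff {w v : M.W} : bound k M w ≤ bound k M v ↔ depth M v ≤ depth M w := by
  unfold bound
  cases depth M w using ENat.recTopCoe <;> cases depth M v using ENat.recTopCoe <;> simp
  omega

lemma bound_nonneg_iff {w : M.W} : 0 ≤ bound k M w ↔ depth M w ≤ k := by
  unfold bound
  cases depth M w using ENat.recTopCoe <;> simp

lemma bound_pos_iff {w : M.W} : 0 < bound k M w ↔ depth M w < k := by
  unfold bound
  cases depth M w using ENat.recTopCoe <;> simp

lemma nbound_eq_sub {w : M.W} {n : ℕ} (h : depth M w = n) : nbound k M w = k - n := by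
  simp [nbound, h]

lemma nbound_le_nbound {w v : M.W} (h : depth M v ≤ depth M w) (hw : depth M w ≠ ⊤) :
    nbound k M w ≤ nbound k M v :=
  Nat.sub_le_sub_left (ENat.toNat_le_toNat h hw) k

lemma nbound_eq_of_bound_eq {w : M.W} {h : ℕ} (hb : bound k M w = ((h : ℤ) : WithBot ℤ)) :
    nbound k M w = h := by
  unfold bound at hb
  unfold nbound
  generalize depth M w = e at hb ⊢
  cases e using ENat.recTopCoe <;> simp at hb ⊢
  omega

end Bound

section MaxRepr

variable {k : ℕ} {M : PModel I P}

lemma mem_maxRepr_iff {x : M.W} : x ∈ maxRepr k M ↔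
    depth M x ≤ k ∧ ∀ y, Bisim M M (nbound k M x) y x → depth M x ≤ depth M y := by
  rw [maxRepr, Set.mem_setOf_eq, ← bound_nonneg_iff]
  refine and_congr_right fun hx => ⟨fun hmax y hb => ?_, fun hmin y hy => ?_⟩
  · rw [← bound_le_bound_iff]
    exact not_lt.1 fun hlt => hmax y ⟨⟨hx, hlt.le, hb⟩, hlt⟩
  · exact (bound_le_bound_iff.2 (hmin y hy.1.2.2)).not_gt hy.2

lemma exists_maxRepr {w : M.W} (hw : depth M w ≤ k) :
    ∃ y ∈ maxRepr k M, depth M y ≤ depth M w ∧ Bisim M M (nbound k M w) y w := by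
  obtain ⟨y, hyw, hmin⟩ := (InvImage.wf (depth M) wellFounded_lt).has_min
    {y | Bisim M M (nbound k M w) y w} ⟨w, Bisim.refl M _ w⟩
  have hyw' : depth M y ≤ depth M w := not_lt.1 (hmin w (Bisim.refl M _ w))
  have hw_ne_top : depth M w ≠ ⊤ := ne_top_of_le_ne_top (ENat.coe_ne_top k) hw
  refine ⟨y, mem_maxRepr_iff.2 ⟨hyw'.trans hw, fun z hz => not_lt.1 (hmin z ?_)⟩, hyw', hyw⟩
  exact (hz.mono (nbound_le_nbound hyw' hw_ne_top)).trans hyw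

lemma self_mem_reprClass (x : M.W) : x ∈ reprClass k M x :=
  Bisim.refl M _ x

lemma reprClass_eq_of_bisim {x y : M.W} (hn : nbound k M x = nbound k M y)
    (hb : Bisim M M (nbound k M x) x y) : reprClass k M x = reprClass k M y := by
  ext w
  simp only [reprClass, Set.mem_setOf_eq, ← hn]
  exact ⟨hb.symm.trans, hb.trans⟩

lemma depth_eq_of_reprClass_eq {x y : M.W} (hx : x ∈ maxRepr k M) (hy : y ∈ maxRepr k M)
    (h : reprClass k M x = reprClass k M y) : depth M x = depth M y := by
  have hxy : y ∈ reprClass k M x := h ▸ self_mem_reprClass y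
  have hyx : x ∈ reprClass k M y := h ▸ self_mem_reprClass x
  exact le_antisymm ((mem_maxRepr_iff.1 hx).2 y hxy.symm) ((mem_maxRepr_iff.1 hy).2 x hyx.symm)

end MaxRepr

section Contraction

variable {k : ℕ} {M : PModel I P}

lemma rootedContraction_V_iff {S : (rootedContraction k M).W} {x : M.W}
    (hx : x ∈ maxRepr k M) (hS : S.1 = reprClass k M x) (p : P) :
    (rootedContraction k M).V p S ↔ M.V p x := by
  refine ⟨fun ⟨x', hx', hS', hp⟩ => ?_, fun hp => ⟨x, hx, hS, hp⟩⟩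
  have hxx' : x' ∈ reprClass k M x := hS.symm.trans hS' ▸ self_mem_reprClass x'
  exact (Bisim.val_iff hxx' p).2 hp

lemma depth_le_of_rootedContraction_R {i : I} {S T : (rootedContraction k M).W} {x y : M.W}
    (hR : (rootedContraction k M).R i S T) (hx : x ∈ maxRepr k M) (hS : S.1 = reprClass k M x)
    (hy : y ∈ maxRepr k M) (hT : T.1 = reprClass k M y) : depth M y ≤ depth M x + 1 := by
  obtain ⟨x', hx', y', hy', hS', hT', hpos, z, hz, hy'z⟩ := hR
  rw [depth_eq_of_reprClass_eq hx hx' (hS.symm.trans hS'),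
    depth_eq_of_reprClass_eq hy hy' (hT.symm.trans hT')]
  obtain ⟨a, ha, -⟩ := ENat.le_coe_iff.1 (mem_maxRepr_iff.1 hx').1
  obtain ⟨b, hb, -⟩ := ENat.le_coe_iff.1 (mem_maxRepr_iff.1 hy').1
  rw [bound_pos_iff, ha, Nat.cast_lt] at hpos
  rw [ha, hb]
  -- Otherwise the successor `z` of `x'` would strictly represent `y'`.
  by_contra! hlt
  have hab : a + 1 < b := by exact_mod_cast hlt
  have hzy' : Bisim M M (nbound k M y') z y' :=
    (hy'z.mono (by rw [nbound_eq_sub ha, nbound_eq_sub hb]; omega)).symm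
  have hbz : (b : ℕ∞) ≤ depth M z := hb ▸ (mem_maxRepr_iff.1 hy').2 z hzy'
  exact (hbz.trans (ha ▸ depth_le_depth_add_one hz)).not_gt hlt

lemma bisim_rootedContraction {n : ℕ} {S : (rootedContraction k M).W} {x : M.W}
    (hx : x ∈ maxRepr k M) (hS : S.1 = reprClass k M x) (hn : n ≤ nbound k M x) :
    Bisim (rootedContraction k M) M n S x := by
  induction n generalizing S x with
  | zero => exact rootedContraction_V_iff hx hS
  | succ n ih =>
    obtain ⟨a, ha, -⟩ := ENat.le_coe_iff.1 (mem_maxRepr_iff.1 hx).1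
    rw [nbound_eq_sub ha] at hn
    refine ⟨rootedContraction_V_iff hx hS, fun i T hST => ?_, fun i v hv => ?_⟩
    · obtain ⟨x', hx', y', hy', hS', hT', -, z, hz, hy'z⟩ := id hST
      obtain ⟨b, hb, -⟩ := ENat.le_coe_iff.1 (mem_maxRepr_iff.1 hy').1
      have hba : b ≤ a + 1 := by
        exact_mod_cast ha ▸ hb ▸ depth_le_of_rootedContraction_R hST hx hS hy' hT'
      have hxx' : x' ∈ reprClass k M x := hS.symm.trans hS' ▸ self_mem_reprClass x'
      have hx'a : depth M x' = a :=
        (depth_eq_of_reprClass_eq hx hx' (hS.symm.trans hS')).symm.trans ha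
      obtain ⟨v, hv, hvz⟩ :=
        (Bisim.mono hxx' (by rw [nbound_eq_sub ha]; omega) : Bisim M M (n + 1) x x').2.2 i z hz
      refine ⟨v, hv, ?_⟩
      have hTy' := ih hy' hT' (by rw [nbound_eq_sub hb]; omega)
      have hy'z' := hy'z.mono (m := n) (by rw [nbound_eq_sub hx'a]; omega)
      exact (hTy'.trans hy'z').trans hvz.symm
    · have hva : depth M v ≤ a + 1 := ha ▸ depth_le_depth_add_one hv
      have hvk : depth M v ≤ k := hva.trans (by exact_mod_cast (by omega : a + 1 ≤ k))
      obtain ⟨c, hc, -⟩ := ENat.le_coe_iff.1 hvk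
      have hca : c ≤ a + 1 := by exact_mod_cast hc ▸ hva
      obtain ⟨y, hy, hyv, hbyv⟩ := exists_maxRepr hvk
      rw [nbound_eq_sub hc] at hbyv
      have hpos : 0 < bound k M x := bound_pos_iff.2 (by rw [ha]; exact_mod_cast (by omega : a < k))
      refine ⟨⟨reprClass k M y, y, hy, rfl⟩,
        ⟨x, hx, y, hy, hS, rfl, hpos, v, hv, hbyv.mono (by rw [nbound_eq_sub ha]; omega)⟩, ?_⟩
      have hny : k - c ≤ nbound k M y := by
        rw [← nbound_eq_sub hc]
        exact nbound_le_nbound hyv (hc ▸ ENat.coe_ne_top c)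
      exact (ih hy rfl (by omega)).trans (hbyv.mono (by omega))

lemma depth_le_of_rootedContraction_steps {m : ℕ} {S T : (rootedContraction k M).W} {x y : M.W}
    (hST : Steps (rootedContraction k M) m S T) (hx : x ∈ maxRepr k M)
    (hS : S.1 = reprClass k M x) (hy : y ∈ maxRepr k M) (hT : T.1 = reprClass k M y) :
    depth M y ≤ depth M x + m := by
  induction m generalizing S x with
  | zero =>
    cases hST
    simpa using (depth_eq_of_reprClass_eq hy hx (hT.symm.trans hS)).le
  | succ m ih =>
    obtain ⟨U, i, hSU, hUT⟩ := hST
    obtain ⟨u, hu, hU⟩ := U.2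
    calc depth M y ≤ depth M u + m := ih hUT hu hU
      _ ≤ depth M x + 1 + m := by gcongr; exact depth_le_of_rootedContraction_R hSU hx hS hu hU
      _ = depth M x + (m + 1 : ℕ) := by push_cast; ring

lemma depth_rootedContraction {S : (rootedContraction k M).W} {x : M.W}
    (hx : x ∈ maxRepr k M) (hS : S.1 = reprClass k M x) :
    depth (rootedContraction k M) S = depth M x := by
  apply le_antisymm
  · -- Lift a shortest path to `x` along the `k`-bisimulation of the roots; by maximality of `x`
    -- the lifted path ends at `S`.
    obtain ⟨a, ha, hak⟩ := ENat.le_coe_iff.1 (mem_maxRepr_iff.1 hx).1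
    have hroot : Bisim (rootedContraction k M) M k (rootedContraction k M).d M.d :=
      bisim_rootedContraction (d_mem_maxRepr k M) rfl (by simp [nbound, depth_d])
    obtain ⟨T, hT_steps, hxT⟩ := hroot.symm.exists_steps (steps_of_depth_eq ha) hak
    obtain ⟨y, hy, hT⟩ := T.2
    have hya : depth M y ≤ a := by
      simpa [depth_d] using
        depth_le_of_rootedContraction_steps hT_steps (d_mem_maxRepr k M) rfl hy hT
    have hnxy : nbound k M x ≤ nbound k M y :=
      nbound_le_nbound (ha ▸ hya) (ha ▸ ENat.coe_ne_top a)
    have hxy : Bisim M M (nbound k M x) x y :=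
      (nbound_eq_sub ha ▸ hxT).trans ((bisim_rootedContraction hy hT le_rfl).mono hnxy)
    have hyx : depth M y = depth M x :=
      le_antisymm (ha ▸ hya) ((mem_maxRepr_iff.1 hx).2 y hxy.symm)
    have hTS : T = S := Subtype.ext <| hT.trans <|
      (reprClass_eq_of_bisim (by rw [nbound, nbound, hyx]) hxy).symm.trans hS.symm
    exact ha ▸ hTS ▸ depth_le_of_steps hT_steps
  · cases hd : depth (rootedContraction k M) S using ENat.recTopCoe with
    | top => exact le_top
    | coe m =>
      simpa [depth_d] using depth_le_of_rootedContraction_steps (steps_of_depth_eq hd)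
        (d_mem_maxRepr k M) rfl hx hS

lemma bound_rootedContraction {S : (rootedContraction k M).W} {x : M.W}
    (hx : x ∈ maxRepr k M) (hS : S.1 = reprClass k M x) :
    bound k (rootedContraction k M) S = bound k M x := by
  rw [bound, bound, depth_rootedContraction hx hS]

end Contraction

/-- Distinct worlds of the rooted `k`-contraction of equal bound `h` are not
`h`-bisimilar. -/
theorem contraction_distinct_not_bisim (k h : ℕ) (M : PModel I P)
    (S T : (rootedContraction k M).W) (hST : S ≠ T)
    (hS : bound k (rootedContraction k M) S = ((h : ℤ) : WithBot ℤ))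
    (hT : bound k (rootedContraction k M) T = ((h : ℤ) : WithBot ℤ)) :
    ¬ Bisim (rootedContraction k M) (rootedContraction k M) h S T := by
  intro hbis
  obtain ⟨x, hx, hSx⟩ := S.2
  obtain ⟨y, hy, hTy⟩ := T.2
  rw [bound_rootedContraction hx hSx] at hS
  rw [bound_rootedContraction hy hTy] at hT
  have hnx : nbound k M x = h := nbound_eq_of_bound_eq hS
  have hny : nbound k M y = h := nbound_eq_of_bound_eq hT
  have hxy : Bisim M M h x y :=
    ((bisim_rootedContraction hx hSx hnx.ge).symm.trans hbis).trans
      (bisim_rootedContraction hy hTy hny.ge)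
  have hcl : reprClass k M x = reprClass k M y :=
    reprClass_eq_of_bisim (hnx.trans hny.symm) (hnx ▸ hxy)
  exact hST (Subtype.ext (hSx.trans (hcl.trans hTy.symm)))
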